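/- Fix N ∈ ℕ, α, β ∈ (0,1) with α ≥ β, λ > 0, w_min < 0 and probability weighting functions W⁺, W⁻, and consider the price-constrained lottery problems P'(n⁻,n⁺) (the lottery problem P(n⁻,n⁺) with the additional constraint w⁻_1 ≥ w_min) with optimal values Π'(n⁻,n⁺). Suppose the pair (N⁻, N⁺) of nonnegative integers with N⁻ + N⁺ = N attains the maximum of Π'(n⁻,n⁺) over all nonnegative integer pairs with n⁻ + n⁺ = N, and suppose Π'* = Π'(N⁻, N⁺) > 0. Then every (w⁻, w⁺) that is a global maximizer of P'(N⁻, N⁺) satisfies w⁻_i = w_min for every i ∈ {1,…,N⁻}. -/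

import Mathlib

open Finset

/-- An inverse S-shaped function on `[0,1]`: strictly increasing, continuously
differentiable, with a derivative strictly decreasing then strictly increasing. -/
def InverseSShaped (W : ℝ → ℝ) : Prop :=
  StrictMonoOn W (Set.Icc (0 : ℝ) 1) ∧
  ContDiffOn ℝ 1 W (Set.Icc (0 : ℝ) 1) ∧
  ∃ x₀ ∈ Set.Icc (0 : ℝ) 1,
    StrictAntiOn (deriv W) (Set.Icc (0 : ℝ) x₀) ∧ StrictMonoOn (deriv W) (Set.Icc x₀ 1)

/-- A probability weighting function: inverse S-shaped with `W 0 = 0` and `W 1 = 1`. -/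
def IsPWF (W : ℝ → ℝ) : Prop :=
  InverseSShaped W ∧ W 0 = 0 ∧ W 1 = 1

/-- Gain decision weights: `h⁺_j = W⁺((n−j+1)/N) − W⁺((n−j)/N)` for `j = 1,…,n`. -/
noncomputable def gainW (W : ℝ → ℝ) (N n j : ℕ) : ℝ :=
  W (((n : ℝ) - j + 1) / N) - W (((n : ℝ) - j) / N)

/-- The transitional index
`J = min{ j ∈ {1,…,n} : j = n ∨ j·h⁺_{j+1} ≥ ∑_{j'≤j} h⁺_{j'} }`. -/
noncomputable def transIdx (W : ℝ → ℝ) (N n : ℕ) : ℕ :=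
  sInf {j : ℕ | 1 ≤ j ∧ j ≤ n ∧
    (j = n ∨ ∑ j' ∈ Finset.Icc 1 j, gainW W N n j' ≤ (j : ℝ) * gainW W N n (j + 1))}

/-- Loss decision weights: `h⁻_i = W⁻(i/N) − W⁻((i−1)/N)` for `i = 1,…,n⁻`. -/
noncomputable def lossW (W : ℝ → ℝ) (N i : ℕ) : ℝ :=
  W ((i : ℝ) / N) - W (((i : ℝ) - 1) / N)

/-- Feasibility for the loss subproblem: `y_1 ≥ y_2 ≥ … ≥ y_n ≥ 0` and `∑ h⁻_i y_i = v`. -/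
def LossFeasible (W : ℝ → ℝ) (N n : ℕ) (v : ℝ) (y : ℕ → ℝ) : Prop :=
  0 ≤ y n ∧ (∀ i ∈ Finset.Icc 1 (n - 1), y (i + 1) ≤ y i) ∧
  ∑ i ∈ Finset.Icc 1 n, lossW W N i * y i = v

/-- The CPT value function: `U(w) = w^α` for `w ≥ 0` and `U(w) = −λ·(−w)^β` for `w < 0`. -/
noncomputable def cptU (α β lam : ℝ) (w : ℝ) : ℝ :=
  if 0 ≤ w then w ^ α else -lam * (-w) ^ β

/-- Feasibility for the lottery problem `P(n⁻,n⁺)`: nonnegative CPT expected utility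
(individual rationality), `0 ≤ w⁺_1 ≤ … ≤ w⁺_{n⁺}`, and `w⁻_1 ≤ … ≤ w⁻_{n⁻} ≤ 0`. -/
def LotFeasible (Wm Wp : ℝ → ℝ) (N : ℕ) (α β lam : ℝ) (nm np : ℕ)
    (wm wp : ℕ → ℝ) : Prop :=
  0 ≤ ∑ i ∈ Finset.Icc 1 nm, lossW Wm N i * cptU α β lam (wm i) +
      ∑ j ∈ Finset.Icc 1 np, gainW Wp N np j * cptU α β lam (wp j) ∧
  (1 ≤ np → 0 ≤ wp 1) ∧ (∀ j ∈ Finset.Icc 1 (np - 1), wp j ≤ wp (j + 1)) ∧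
  (1 ≤ nm → wm nm ≤ 0) ∧ (∀ i ∈ Finset.Icc 1 (nm - 1), wm i ≤ wm (i + 1))

/-- The seller's profit: `∑_i (−w⁻_i) − ∑_j w⁺_j`. -/
def LotObj (nm np : ℕ) (wm wp : ℕ → ℝ) : ℝ :=
  ∑ i ∈ Finset.Icc 1 nm, (-(wm i)) - ∑ j ∈ Finset.Icc 1 np, wp j

/-- Feasibility for the price-constrained lottery problem `P'(n⁻,n⁺)`: feasibility for
`P(n⁻,n⁺)` together with the fixed-price constraint `w⁻_1 ≥ w_min`. -/
def PLotFeasible (Wm Wp : ℝ → ℝ) (N : ℕ) (α β lam wmin : ℝ) (nm np : ℕ)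
    (wm wp : ℕ → ℝ) : Prop :=
  LotFeasible Wm Wp N α β lam nm np wm wp ∧ (1 ≤ nm → wmin ≤ wm 1)

/-!
Let `(w⁻, w⁺)` be optimal for `P'(N⁻, N⁺)` with some `w⁻_i > w_min`; as its profit is positive,
it has a strict loss and gains of positive value `G` and cost `B`.

If `w⁻_{N⁻} = 0`, this outcome is better used as one more gain: the gains
`ε, ε + w⁺_1, …, ε + w⁺_{N⁺}` have value at least `G + h ε ^ α`, with `h > 0` the weight of the
new smallest gain, so they can be shrunk by the factor `(G / (G + h ε ^ α)) ^ (1 / α)`, that is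
`1 - Θ(ε ^ α)`; for small `ε` this saves more than the `O(ε)` they add, and the split
`(N⁻ - 1, N⁺ + 1)` would beat `Π'*`.

Otherwise all losses are negative. Move every loss equal to `c = w⁻_i ∈ (w_min, 0)` to `-V` and
rescale the gains to keep the lottery individually rational: for `V` near `-c` this is feasible,
with profit `M + κ V - b (R + Λ V ^ β) ^ (1 / α)`, where `b, Λ > 0` and `R ≥ 0`, and `R = 0` only if
all losses equal `c`. As `β ≤ α`, this is strictly convex in `V` unless `R = 0` and `β = α`, in
which case it is linear with positive slope. Either way `V = -c` is not a local maximum,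
contradicting optimality.
-/

open Filter Topology

lemma StrictConvexOn.not_isLocalMax {s : Set ℝ} {f : ℝ → ℝ} {x : ℝ}
    (hf : StrictConvexOn ℝ s f) (hs : s ∈ 𝓝 x) : ¬IsLocalMax f x := by
  intro hmax
  obtain ⟨ε, hε, hball⟩ := Metric.eventually_nhds_iff.mp (hmax.and hs)
  have hnear : ∀ t, |t| < ε → f (x + t) ≤ f x ∧ x + t ∈ s := fun t ht =>
    hball (by simpa [Real.dist_eq] using ht)
  obtain ⟨hle₁, hmem₁⟩ := hnear (-(ε / 2)) (by rw [abs_neg, abs_of_pos (half_pos hε)]; linarith)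
  obtain ⟨hle₂, hmem₂⟩ := hnear (ε / 2) (by rw [abs_of_pos (half_pos hε)]; linarith)
  have hlt := hf.2 hmem₁ hmem₂ (by linarith) (one_half_pos) (one_half_pos) (add_halves 1)
  simp only [smul_eq_mul] at hlt
  rw [show 1 / 2 * (x + -(ε / 2)) + 1 / 2 * (x + ε / 2) = x by ring] at hlt
  linarith

lemma StrictMonoOn.not_isLocalMax {s : Set ℝ} {f : ℝ → ℝ} {x : ℝ}
    (hf : StrictMonoOn f s) (hs : s ∈ 𝓝 x) : ¬IsLocalMax f x := by
  intro hmax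
  obtain ⟨y, ⟨hfy, hy⟩, hxy⟩ := ((hmax.and hs).filter_mono nhdsWithin_le_nhds).and
    (self_mem_nhdsWithin (s := Set.Ioi x)) |>.exists
  exact (hf (mem_of_mem_nhds hs) hy hxy).not_ge hfy

lemma exists_pos_lt_mul_rpow {α c : ℝ} (hα : α < 1) (hc : 0 < c) : ∃ ε > 0, ε < c * ε ^ α := by
  set ε := (c / 2) ^ (1 / (1 - α)) with hε
  have hε0 : 0 < ε := by positivity
  have hεα : ε ^ (1 - α) = c / 2 := by
    rw [hε, ← Real.rpow_mul (by positivity), one_div, inv_mul_cancel₀ (by linarith),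
      Real.rpow_one]
  refine ⟨ε, hε0, ?_⟩
  calc ε = ε ^ α * ε ^ (1 - α) := by rw [← Real.rpow_add hε0, add_sub_cancel, Real.rpow_one]
    _ < c * ε ^ α := by rw [hεα]; nlinarith [Real.rpow_pos_of_pos hε0 α]

section Concavity

variable {R Λ α β V : ℝ}

lemma hasDerivAt_rpow_add_mul_rpow (hV : 0 < V) (hu : 0 < R + Λ * V ^ β) :
    HasDerivAt (fun V : ℝ => (R + Λ * V ^ β) ^ (1 / α))
      (Λ * β / α * ((R + Λ * V ^ β) ^ (1 / α - 1) * V ^ (β - 1))) V := by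
  have hin : HasDerivAt (fun x : ℝ => R + Λ * x ^ β) (Λ * (β * V ^ (β - 1))) V := by
    simpa using ((Real.hasDerivAt_rpow_const (p := β) (Or.inl hV.ne')).const_mul Λ).const_add R
  refine ((Real.hasDerivAt_rpow_const (p := 1 / α) (Or.inl hu.ne')).comp V hin).congr_deriv ?_
  ring

lemma hasDerivAt_deriv_rpow_add_mul_rpow (hα : α ≠ 0) (hV : 0 < V) (hu : 0 < R + Λ * V ^ β) :
    HasDerivAt (fun V : ℝ => Λ * β / α * ((R + Λ * V ^ β) ^ (1 / α - 1) * V ^ (β - 1)))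
      (Λ * β / α * ((R + Λ * V ^ β) ^ (1 / α - 2) * V ^ (β - 2) *
        ((β - 1) * R + Λ * V ^ β * ((β - α) / α)))) V := by
  have hin : HasDerivAt (fun x : ℝ => R + Λ * x ^ β) (Λ * (β * V ^ (β - 1))) V := by
    simpa using ((Real.hasDerivAt_rpow_const (p := β) (Or.inl hV.ne')).const_mul Λ).const_add R
  have hA := (Real.hasDerivAt_rpow_const (p := 1 / α - 1) (Or.inl hu.ne')).comp V hin
  have hB := Real.hasDerivAt_rpow_const (p := β - 1) (Or.inl hV.ne')
  refine ((hA.mul hB).const_mul (Λ * β / α)).congr_deriv ?_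
  have e1 : (R + Λ * V ^ β) ^ (1 / α - 1) = (R + Λ * V ^ β) ^ (1 / α - 2) * (R + Λ * V ^ β) := by
    rw [← Real.rpow_add_one hu.ne']; ring_nf
  have e2 : V ^ (β - 1) * V ^ (β - 1) = V ^ (β - 2) * V ^ β := by
    rw [← Real.rpow_add hV, ← Real.rpow_add hV]; ring_nf
  rw [Function.comp_apply, show (1 / α - 1 - 1 : ℝ) = 1 / α - 2 by ring,
    show (β - 1 - 1 : ℝ) = β - 2 by ring, e1, sub_div, div_self hα]
  linear_combination (Λ * β / α * (1 / α - 1) * Λ * β * (R + Λ * V ^ β) ^ (1 / α - 2)) * e2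

lemma strictConcaveOn_rpow_add_mul_rpow (hR : 0 ≤ R) (hΛ : 0 < Λ) (hα : 0 < α) (hβ0 : 0 < β)
    (hβα : β ≤ α) (hβ1 : β < 1) (hstrict : 0 < R ∨ β < α) :
    StrictConcaveOn ℝ (Set.Ici 0) (fun V : ℝ => (R + Λ * V ^ β) ^ (1 / α)) := by
  have hu : ∀ V : ℝ, 0 < V → 0 < R + Λ * V ^ β := fun V hV => by positivity
  refine strictConcaveOn_of_deriv2_neg (convex_Ici 0) ?_ fun V hV => ?_
  · refine ContinuousOn.rpow_const (continuousOn_const.add (continuousOn_const.mul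
      (continuousOn_id.rpow_const fun _ _ => Or.inr hβ0.le))) fun V hV => Or.inr (by positivity)
  rw [interior_Ici, Set.mem_Ioi] at hV
  have hderiv : deriv (fun V : ℝ => (R + Λ * V ^ β) ^ (1 / α)) =ᶠ[𝓝 V]
      fun V => Λ * β / α * ((R + Λ * V ^ β) ^ (1 / α - 1) * V ^ (β - 1)) :=
    eventually_of_mem (Ioi_mem_nhds hV) fun W hW =>
      (hasDerivAt_rpow_add_mul_rpow hW (hu W hW)).deriv
  rw [Function.iterate_succ_apply, Function.iterate_one, hderiv.deriv_eq,
    (hasDerivAt_deriv_rpow_add_mul_rpow hα.ne' hV (hu V hV)).deriv]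
  have hsign : (β - 1) * R + Λ * V ^ β * ((β - α) / α) < 0 := by
    have : 0 < Λ * V ^ β := by positivity
    rcases hstrict with hR' | hβα'
    · nlinarith [div_nonpos_of_nonpos_of_nonneg (sub_nonpos.2 hβα) hα.le]
    · nlinarith [div_neg_of_neg_of_pos (sub_neg.2 hβα') hα]
  exact mul_neg_of_pos_of_neg (by positivity) (mul_neg_of_pos_of_neg (by positivity) hsign)

end Concavity

lemma not_isLocalMax_sub_mul_rpow_add_mul_rpow {M κ b R Λ α β V : ℝ} (hb : 0 < b) (hR : 0 ≤ R)
    (hΛ : 0 < Λ) (hα : 0 < α) (hβ0 : 0 < β) (hβα : β ≤ α) (hβ1 : β < 1) (hV : 0 < V)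
    (hdeg : R = 0 → M = 0) (hψ : 0 < M + κ * V - b * (R + Λ * V ^ β) ^ (1 / α)) :
    ¬IsLocalMax (fun V : ℝ => M + κ * V - b * (R + Λ * V ^ β) ^ (1 / α)) V := by
  by_cases hstrict : 0 < R ∨ β < α
  · refine StrictConvexOn.not_isLocalMax ⟨convex_Ici 0, fun x hx y hy hxy a c ha hc hac => ?_⟩
      (Ici_mem_nhds hV)
    have hg :=
      (strictConcaveOn_rpow_add_mul_rpow hR hΛ hα hβ0 hβα hβ1 hstrict).2 hx hy hxy ha hc hac
    have hM : a * M + c * M = M := by rw [← add_mul, hac, one_mul]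
    simp only [smul_eq_mul] at hg ⊢
    nlinarith [mul_lt_mul_of_pos_left hg hb]
  · obtain ⟨hR0, hαβ⟩ := not_or.mp hstrict
    obtain rfl : R = 0 := le_antisymm (not_lt.mp hR0) hR
    obtain rfl : β = α := le_antisymm hβα (not_lt.mp hαβ)
    have hlin : ∀ x : ℝ, 0 ≤ x → M + κ * x - b * (0 + Λ * x ^ β) ^ (1 / β)
        = (κ - b * Λ ^ (1 / β)) * x := fun x hx => by
      rw [zero_add, Real.mul_rpow hΛ.le (by positivity), one_div,
        Real.rpow_rpow_inv hx hβ0.ne', hdeg rfl]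
      ring
    rw [hlin V hV.le] at hψ
    have hk : 0 < κ - b * Λ ^ (1 / β) := pos_of_mul_pos_left hψ hV.le
    refine StrictMonoOn.not_isLocalMax (s := Set.Ici 0) (fun x hx y hy hxy => ?_) (Ici_mem_nhds hV)
    simp only [hlin x hx, hlin y hy]
    exact mul_lt_mul_of_pos_left hxy hk

lemma sum_Icc_one_add_one {M : Type*} [AddCommMonoid M] (f : ℕ → M) (n : ℕ) :
    ∑ j ∈ Icc 1 (n + 1), f j = f 1 + ∑ j ∈ Icc 1 n, f (j + 1) := by
  rw [← insert_Icc_add_one_left_eq_Icc (by omega), sum_insert (by simp), ← map_add_right_Icc,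
    sum_map]
  rfl

lemma monotoneOn_Icc_one_of_le_add_one {β : Type*} [Preorder β] {f : ℕ → β} {n : ℕ}
    (hf : ∀ i ∈ Icc 1 (n - 1), f i ≤ f (i + 1)) : MonotoneOn f (Set.Icc 1 n) :=
  monotoneOn_of_le_succ Set.ordConnected_Icc fun i _ hi hi' =>
    hf i (Finset.mem_Icc.2 ⟨hi.1, Nat.le_sub_one_of_lt (Nat.succ_le_iff.1 hi'.2)⟩)

section CPT

variable {α β lam : ℝ}

lemma cptU_of_nonneg {w : ℝ} (hw : 0 ≤ w) : cptU α β lam w = w ^ α := if_pos hw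

lemma cptU_zero (hα : 0 < α) : cptU α β lam 0 = 0 := by
  rw [cptU_of_nonneg le_rfl, Real.zero_rpow hα.ne']

lemma cptU_neg_of_nonneg (hα : 0 < α) (hβ : 0 < β) {V : ℝ} (hV : 0 ≤ V) :
    cptU α β lam (-V) = -(lam * V ^ β) := by
  rcases hV.eq_or_lt with rfl | hV
  · rw [neg_zero, cptU_zero hα, Real.zero_rpow hβ.ne', mul_zero, neg_zero]
  · rw [cptU, if_neg (by linarith), neg_neg, neg_mul]

lemma cptU_neg (hlam : 0 < lam) {w : ℝ} (hw : w < 0) : cptU α β lam w < 0 := by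
  rw [cptU, if_neg hw.not_ge, neg_mul, neg_neg_iff_pos]
  exact mul_pos hlam (Real.rpow_pos_of_pos (neg_pos.2 hw) β)

lemma cptU_nonpos (hα : 0 < α) (hlam : 0 < lam) {w : ℝ} (hw : w ≤ 0) : cptU α β lam w ≤ 0 := by
  rcases hw.eq_or_lt with rfl | hw
  · exact (cptU_zero hα).le
  · exact (cptU_neg hlam hw).le

lemma cptU_mul {s w : ℝ} (hs : 0 ≤ s) (hw : 0 ≤ w) :
    cptU α β lam (s * w) = s ^ α * cptU α β lam w := by
  rw [cptU_of_nonneg (mul_nonneg hs hw), cptU_of_nonneg hw, Real.mul_rpow hs hw]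

end CPT

section Weights

variable {W : ℝ → ℝ} {N : ℕ}

lemma StrictMonoOn.sub_div_pos (hW : StrictMonoOn W (Set.Icc 0 1)) {a : ℝ} (ha : 0 ≤ a)
    (haN : a + 1 ≤ N) : 0 < W ((a + 1) / N) - W (a / N) := by
  have hN : (0 : ℝ) < N := by linarith
  refine sub_pos.2 (hW ⟨by positivity, ?_⟩ ⟨by positivity, ?_⟩ ?_)
  · rw [div_le_one hN]; linarith
  · rw [div_le_one hN]; linarith
  · exact div_lt_div_of_pos_right (by linarith) hN

lemma lossW_pos (hW : StrictMonoOn W (Set.Icc 0 1)) {n i : ℕ} (hn : n ≤ N) (hi : i ∈ Icc 1 n) :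
    0 < lossW W N i := by
  rw [Finset.mem_Icc] at hi
  have := hW.sub_div_pos (a := i - 1) (by simpa using hi.1) (by simpa using hi.2.trans hn)
  rwa [sub_add_cancel] at this

lemma gainW_pos (hW : StrictMonoOn W (Set.Icc 0 1)) {n j : ℕ} (hj : 1 ≤ j) (hjn : j ≤ n)
    (hnN : n ≤ N) : 0 < gainW W N n j :=
  hW.sub_div_pos (a := n - j) (by simpa using hjn)
    (by have : (1 : ℝ) ≤ j := by exact_mod_cast hj
        have : (n : ℝ) ≤ N := by exact_mod_cast hnN
        linarith)

lemma gainW_succ_succ (n j : ℕ) : gainW W N (n + 1) (j + 1) = gainW W N n j := by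
  simp only [gainW]; push_cast; ring_nf

end Weights

noncomputable def lossValue (Wm : ℝ → ℝ) (N : ℕ) (α β lam : ℝ) (n : ℕ) (w : ℕ → ℝ) : ℝ :=
  ∑ i ∈ Icc 1 n, lossW Wm N i * cptU α β lam (w i)

noncomputable def gainValue (Wp : ℝ → ℝ) (N : ℕ) (α β lam : ℝ) (n : ℕ) (w : ℕ → ℝ) : ℝ :=
  ∑ j ∈ Icc 1 n, gainW Wp N n j * cptU α β lam (w j)

section Lottery

variable {Wm Wp : ℝ → ℝ} {N : ℕ} {α β lam wmin : ℝ} {nm np : ℕ} {wm wp : ℕ → ℝ}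

section LossValue

variable {n : ℕ} {w : ℕ → ℝ}

lemma lossValue_nonpos (hWm : StrictMonoOn Wm (Set.Icc 0 1)) (hα : 0 < α) (hlam : 0 < lam)
    (hN : n ≤ N) (hw : ∀ i ∈ Icc 1 n, w i ≤ 0) : lossValue Wm N α β lam n w ≤ 0 :=
  sum_nonpos fun i hi =>
    mul_nonpos_of_nonneg_of_nonpos (lossW_pos hWm hN hi).le (cptU_nonpos hα hlam (hw i hi))

lemma lossValue_neg (hWm : StrictMonoOn Wm (Set.Icc 0 1)) (hα : 0 < α) (hlam : 0 < lam)
    (hN : n ≤ N) (hw : ∀ i ∈ Icc 1 n, w i ≤ 0) {i : ℕ} (hi : i ∈ Icc 1 n) (hwi : w i < 0) :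
    lossValue Wm N α β lam n w < 0 :=
  sum_neg' (fun i hi =>
      mul_nonpos_of_nonneg_of_nonpos (lossW_pos hWm hN hi).le (cptU_nonpos hα hlam (hw i hi)))
    ⟨i, hi, mul_neg_of_pos_of_neg (lossW_pos hWm hN hi) (cptU_neg hlam hwi)⟩

end LossValue

namespace LotFeasible

lemma wm_le_last (h : LotFeasible Wm Wp N α β lam nm np wm wp) {i : ℕ} (hi : i ∈ Icc 1 nm) :
    wm i ≤ wm nm := by
  rw [Finset.mem_Icc] at hi
  exact monotoneOn_Icc_one_of_le_add_one h.2.2.2.2 hi ⟨hi.1.trans hi.2, le_rfl⟩ hi.2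

lemma wm_nonpos (h : LotFeasible Wm Wp N α β lam nm np wm wp) {i : ℕ} (hi : i ∈ Icc 1 nm) :
    wm i ≤ 0 :=
  (h.wm_le_last hi).trans (h.2.2.2.1 ((Finset.mem_Icc.1 hi).1.trans (Finset.mem_Icc.1 hi).2))

lemma wp_nonneg (h : LotFeasible Wm Wp N α β lam nm np wm wp) {j : ℕ} (hj : j ∈ Icc 1 np) :
    0 ≤ wp j := by
  rw [Finset.mem_Icc] at hj
  exact (h.2.1 (hj.1.trans hj.2)).trans
    (monotoneOn_Icc_one_of_le_add_one h.2.2.1 ⟨le_rfl, hj.1.trans hj.2⟩ hj hj.1)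

lemma gainValue_pos_and_sum_pos (h : LotFeasible Wm Wp N α β lam nm np wm wp)
    (hWm : StrictMonoOn Wm (Set.Icc 0 1)) (hα : 0 < α) (hlam : 0 < lam) (hN : nm ≤ N)
    (hpos : 0 < LotObj nm np wm wp) :
    0 < gainValue Wp N α β lam np wp ∧ 0 < ∑ j ∈ Icc 1 np, wp j := by
  have hB : 0 ≤ ∑ j ∈ Icc 1 np, wp j := sum_nonneg fun j hj => h.wp_nonneg hj
  obtain ⟨i, hi, hwi⟩ : ∃ i ∈ Icc 1 nm, wm i < 0 := by
    have : ∑ i ∈ Icc 1 nm, (0 : ℝ) < ∑ i ∈ Icc 1 nm, -wm i := by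
      rw [sum_const_zero]; unfold LotObj at hpos; linarith
    simpa using exists_lt_of_sum_lt this
  have hIR : 0 ≤ lossValue Wm N α β lam nm wm + gainValue Wp N α β lam np wp := h.1
  have hG : 0 < gainValue Wp N α β lam np wp := by
    linarith [lossValue_neg (β := β) hWm hα hlam hN (fun i hi => h.wm_nonpos hi) hi hwi]
  refine ⟨hG, sum_pos' (fun j hj => h.wp_nonneg hj) ?_⟩
  obtain ⟨j, hj, hGj⟩ := exists_lt_of_sum_lt (show ∑ j ∈ Icc 1 np, (0 : ℝ) <
      ∑ j ∈ Icc 1 np, gainW Wp N np j * cptU α β lam (wp j) by rwa [sum_const_zero])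
  refine ⟨j, hj, (h.wp_nonneg hj).lt_of_ne fun hzero => ?_⟩
  rw [← hzero, cptU_zero hα, mul_zero] at hGj
  exact hGj.false

end LotFeasible

lemma PLotFeasible.wmin_le (h : PLotFeasible Wm Wp N α β lam wmin nm np wm wp) {i : ℕ}
    (hi : i ∈ Icc 1 nm) : wmin ≤ wm i := by
  rw [Finset.mem_Icc] at hi
  exact (h.2 (hi.1.trans hi.2)).trans
    (monotoneOn_Icc_one_of_le_add_one h.1.2.2.2.2 ⟨le_rfl, hi.1.trans hi.2⟩ hi hi.1)

end Lottery

section Gains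

variable {Wp : ℝ → ℝ} {N : ℕ} {α β lam : ℝ} {n : ℕ} {v : ℕ → ℝ}

lemma gainValue_smul {s : ℝ} (hs : 0 ≤ s) (hv : ∀ j ∈ Icc 1 n, 0 ≤ v j) :
    gainValue Wp N α β lam n (fun j => s * v j) = s ^ α * gainValue Wp N α β lam n v := by
  simp only [gainValue, mul_sum]
  exact sum_congr rfl fun j hj => by rw [cptU_mul hs (hv j hj)]; ring

lemma gainValue_rescale (hα : α ≠ 0) (hv : ∀ j ∈ Icc 1 n, 0 ≤ v j)
    (hG : 0 < gainValue Wp N α β lam n v) {u : ℝ} (hu : 0 ≤ u) :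
    gainValue Wp N α β lam n (fun j => (u / gainValue Wp N α β lam n v) ^ (1 / α) * v j) = u := by
  rw [gainValue_smul (by positivity) hv, ← Real.rpow_mul (by positivity), one_div,
    inv_mul_cancel₀ hα, Real.rpow_one, div_mul_cancel₀ _ hG.ne']

end Gains

/-- The gains `ε, ε + w 1, …, ε + w n`. -/
def shiftGains (ε : ℝ) (w : ℕ → ℝ) : ℕ → ℝ := fun j => ε + if j = 1 then 0 else w (j - 1)

section ShiftGains

variable {Wp : ℝ → ℝ} {N : ℕ} {α β lam ε : ℝ} {n : ℕ} {w : ℕ → ℝ}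

lemma shiftGains_one : shiftGains ε w 1 = ε := by simp [shiftGains]

lemma shiftGains_add_one {j : ℕ} (hj : 1 ≤ j) : shiftGains ε w (j + 1) = ε + w j := by
  simp [shiftGains, Nat.one_le_iff_ne_zero.1 hj]

lemma sum_shiftGains :
    ∑ j ∈ Icc 1 (n + 1), shiftGains ε w j = (n + 1) * ε + ∑ j ∈ Icc 1 n, w j := by
  rw [sum_Icc_one_add_one, shiftGains_one,
    sum_congr rfl fun j hj => shiftGains_add_one (Finset.mem_Icc.1 hj).1, sum_add_distrib,
    sum_const, Nat.card_Icc, nsmul_eq_mul]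
  push_cast; ring

lemma gainValue_shiftGains_ge (hW : StrictMonoOn Wp (Set.Icc 0 1)) (hα : 0 < α) (hε : 0 ≤ ε)
    (hnN : n + 1 ≤ N) (hw : ∀ j ∈ Icc 1 n, 0 ≤ w j) :
    gainW Wp N (n + 1) 1 * ε ^ α + gainValue Wp N α β lam n w ≤
      gainValue Wp N α β lam (n + 1) (shiftGains ε w) := by
  unfold gainValue
  rw [sum_Icc_one_add_one, shiftGains_one, cptU_of_nonneg hε]
  refine add_le_add_right (sum_le_sum fun j hj => ?_) _
  have hj := Finset.mem_Icc.1 hj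
  rw [gainW_succ_succ, shiftGains_add_one hj.1, cptU_of_nonneg (hw j (Finset.mem_Icc.2 hj)),
    cptU_of_nonneg (by linarith [hw j (Finset.mem_Icc.2 hj)])]
  exact mul_le_mul_of_nonneg_left
    (Real.rpow_le_rpow (hw j (Finset.mem_Icc.2 hj)) (by linarith) hα.le)
    (gainW_pos hW hj.1 hj.2 (by omega)).le

lemma shiftGains_nonneg (hε : 0 ≤ ε) (hw : ∀ j ∈ Icc 1 n, 0 ≤ w j) {j : ℕ}
    (hj : j ∈ Icc 1 (n + 1)) : 0 ≤ shiftGains ε w j := by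
  rw [Finset.mem_Icc] at hj
  unfold shiftGains
  split_ifs with h1
  · simpa using hε
  · linarith [hw (j - 1) (Finset.mem_Icc.2 ⟨by omega, by omega⟩)]

lemma shiftGains_le_add_one (hw : ∀ j ∈ Icc 1 n, 0 ≤ w j)
    (hmono : ∀ j ∈ Icc 1 (n - 1), w j ≤ w (j + 1)) {j : ℕ} (hj : j ∈ Icc 1 n) :
    shiftGains ε w j ≤ shiftGains ε w (j + 1) := by
  have hw0 := hw j hj
  rw [Finset.mem_Icc] at hj
  rw [shiftGains_add_one hj.1]
  unfold shiftGains
  split_ifs with h1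
  · simpa using hw0
  · have := hmono (j - 1) (Finset.mem_Icc.2 (by omega))
    rw [Nat.sub_add_cancel (by omega)] at this
    linarith

end ShiftGains

section ZeroLoss

variable {Wm Wp : ℝ → ℝ} {N : ℕ} {α β lam wmin : ℝ} {nm np : ℕ} {wm wp : ℕ → ℝ}

theorem exists_cheaper_gains_succ (hWp : StrictMonoOn Wp (Set.Icc 0 1)) (hα0 : 0 < α)
    (hα1 : α < 1) (hN : np + 1 ≤ N) (hwp : ∀ j ∈ Icc 1 np, 0 ≤ wp j)
    (hmono : ∀ j ∈ Icc 1 (np - 1), wp j ≤ wp (j + 1)) (hG : 0 < gainValue Wp N α β lam np wp)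
    (hB : 0 < ∑ j ∈ Icc 1 np, wp j) :
    ∃ v : ℕ → ℝ, 0 ≤ v 1 ∧ (∀ j ∈ Icc 1 np, v j ≤ v (j + 1)) ∧
      gainValue Wp N α β lam (np + 1) v = gainValue Wp N α β lam np wp ∧
      ∑ j ∈ Icc 1 (np + 1), v j < ∑ j ∈ Icc 1 np, wp j := by
  set G := gainValue Wp N α β lam np wp
  set B := ∑ j ∈ Icc 1 np, wp j
  set w := gainW Wp N (np + 1) 1
  have hw : 0 < w := gainW_pos hWp le_rfl (by omega) hN
  obtain ⟨ε, hε, hεlt⟩ := exists_pos_lt_mul_rpow hα1 (c := B * w / ((np + 1) * G)) (by positivity)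
  have hv := fun j (hj : j ∈ Icc 1 (np + 1)) => shiftGains_nonneg hε.le hwp hj
  set Gv := gainValue Wp N α β lam (np + 1) (shiftGains ε wp)
  have hGv : w * ε ^ α + G ≤ Gv := gainValue_shiftGains_ge hWp hα0 hε.le hN hwp
  have hεα : 0 < ε ^ α := by positivity
  have hGGv : G < Gv := by linarith [mul_pos hw hεα]
  have hGv0 : 0 < Gv := hG.trans hGGv
  set s := (G / Gv) ^ (1 / α)
  have hs0 : 0 ≤ s := by positivity
  have hs : s ≤ G / (w * ε ^ α + G) := calc
    s ≤ (G / Gv) ^ (1 : ℝ) := Real.rpow_le_rpow_of_exponent_ge (by positivity)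
        ((div_le_one hGv0).2 hGGv.le) (by rw [le_div_iff₀ hα0]; linarith)
    _ ≤ G / (w * ε ^ α + G) := by
        rw [Real.rpow_one]; exact div_le_div_of_nonneg_left hG.le (by positivity) hGv
  refine ⟨fun j => s * shiftGains ε wp j, mul_nonneg hs0 (hv 1 (by simp)),
    fun j hj => mul_le_mul_of_nonneg_left (shiftGains_le_add_one hwp hmono hj) hs0,
    gainValue_rescale hα0.ne' hv hGv0 hG.le, ?_⟩
  have hεB : (np + 1) * G * ε < B * w * ε ^ α := by
    rw [div_mul_eq_mul_div, lt_div_iff₀ (by positivity)] at hεlt; linarith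
  rw [← mul_sum, sum_shiftGains]
  calc s * ((np + 1) * ε + B) ≤ G / (w * ε ^ α + G) * ((np + 1) * ε + B) :=
        mul_le_mul_of_nonneg_right hs (by positivity)
    _ < B := by rw [div_mul_eq_mul_div, div_lt_iff₀ (by positivity)]; nlinarith

theorem exists_lotObj_gt_of_wm_last_eq_zero (hWm : StrictMonoOn Wm (Set.Icc 0 1))
    (hWp : StrictMonoOn Wp (Set.Icc 0 1)) (hα0 : 0 < α) (hα1 : α < 1) (hlam : 0 < lam)
    (hN : nm + 1 + np = N) (h : PLotFeasible Wm Wp N α β lam wmin (nm + 1) np wm wp)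
    (hzero : wm (nm + 1) = 0) (hpos : 0 < LotObj (nm + 1) np wm wp) :
    ∃ wp', PLotFeasible Wm Wp N α β lam wmin nm (np + 1) wm wp' ∧
      LotObj (nm + 1) np wm wp < LotObj nm (np + 1) wm wp' := by
  obtain ⟨hG, hB⟩ := h.1.gainValue_pos_and_sum_pos hWm hα0 hlam (by omega) hpos
  obtain ⟨v, hv1, hvmono, hvG, hvB⟩ := exists_cheaper_gains_succ hWp hα0 hα1 (by omega)
    (fun j hj => h.1.wp_nonneg hj) h.1.2.2.1 hG hB
  have hlossValue : lossValue Wm N α β lam (nm + 1) wm = lossValue Wm N α β lam nm wm := by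
    rw [lossValue, sum_Icc_succ_top (by omega), hzero, cptU_zero hα0, mul_zero, add_zero, lossValue]
  have hlossCost : ∑ i ∈ Icc 1 (nm + 1), -wm i = ∑ i ∈ Icc 1 nm, -wm i := by
    rw [sum_Icc_succ_top (by omega), hzero, neg_zero, add_zero]
  refine ⟨v, ⟨⟨?_, fun _ => hv1, by simpa using hvmono, fun hnm => ?_, fun i hi => ?_⟩,
    fun hnm => h.2 (by omega)⟩, ?_⟩
  · show 0 ≤ lossValue Wm N α β lam nm wm + gainValue Wp N α β lam (np + 1) v
    rw [hvG, ← hlossValue]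
    exact h.1.1
  · exact h.1.wm_nonpos (Finset.mem_Icc.2 ⟨hnm, by omega⟩)
  · exact h.1.2.2.2.2 i (Finset.mem_Icc.2 (by simp at hi; omega))
  · unfold LotObj
    rw [hlossCost]
    linarith

end ZeroLoss

noncomputable def replaceLevel (w : ℕ → ℝ) (c x : ℝ) : ℕ → ℝ := fun j => if w j = c then x else w j

section ReplaceLevel

variable {Wm : ℝ → ℝ} {N : ℕ} {α β lam wmin c V : ℝ} {n : ℕ} {w : ℕ → ℝ}

lemma replaceLevel_self : replaceLevel w c c = w := by
  funext j; unfold replaceLevel; split_ifs with h <;> simp [h]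

lemma sum_neg_replaceLevel :
    ∑ i ∈ Icc 1 n, -replaceLevel w c (-V) i =
      ∑ i ∈ Icc 1 n with w i ≠ c, -w i + #{i ∈ Icc 1 n | w i = c} * V := by
  simp only [replaceLevel, apply_ite, neg_neg, sum_ite, sum_const, nsmul_eq_mul]
  ring

lemma lossValue_replaceLevel (hα : 0 < α) (hβ : 0 < β) (hV : 0 ≤ V) :
    lossValue Wm N α β lam n (replaceLevel w c (-V)) =
      ∑ i ∈ Icc 1 n with w i ≠ c, lossW Wm N i * cptU α β lam (w i) -
        lam * (∑ i ∈ Icc 1 n with w i = c, lossW Wm N i) * V ^ β := by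
  simp only [lossValue, replaceLevel, apply_ite, sum_ite, cptU_neg_of_nonneg hα hβ hV, ← sum_mul]
  ring

lemma eventually_replaceLevel_ordered (hmono : ∀ i ∈ Icc 1 (n - 1), w i ≤ w (i + 1))
    (htop : 1 ≤ n → w n ≤ 0) (hprice : 1 ≤ n → wmin ≤ w 1) (hc : wmin < c) (hc0 : c < 0) :
    ∀ᶠ V in 𝓝 (-c), (1 ≤ n → replaceLevel w c (-V) n ≤ 0) ∧
      (∀ i ∈ Icc 1 (n - 1), replaceLevel w c (-V) i ≤ replaceLevel w c (-V) (i + 1)) ∧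
      (1 ≤ n → wmin ≤ replaceLevel w c (-V) 1) := by
  have hbelow : ∀ᶠ V in 𝓝 (-c), ∀ i ∈ Icc 1 n, w i < c → w i < -V :=
    (eventually_all_finset _).2 fun i _ => by
      by_cases hi : w i < c
      · filter_upwards [eventually_lt_nhds (neg_lt_neg hi)] with V hV _ using by linarith
      · exact Eventually.of_forall fun _ h => absurd h hi
  have habove : ∀ᶠ V in 𝓝 (-c), ∀ i ∈ Icc 1 n, c < w i → -V < w i :=
    (eventually_all_finset _).2 fun i _ => by
      by_cases hi : c < w i
      · filter_upwards [eventually_gt_nhds (neg_lt_neg hi)] with V hV _ using by linarith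
      · exact Eventually.of_forall fun _ h => absurd h hi
  filter_upwards [hbelow, habove, eventually_gt_nhds (neg_pos.2 hc0),
    eventually_lt_nhds (neg_lt_neg hc)] with V hbelow habove hV0 hVmin
  refine ⟨fun hn => ?_, fun i hi => ?_, fun hn => ?_⟩ <;> unfold replaceLevel
  · split_ifs
    · linarith
    · exact htop hn
  · have hi' := Finset.mem_Icc.1 hi
    have hle : w i ≤ w (i + 1) := hmono i hi
    split_ifs with h1 h2 h2
    · exact le_rfl
    · exact (habove (i + 1) (Finset.mem_Icc.2 (by omega))
        (lt_of_le_of_ne (h1 ▸ hle) (Ne.symm h2))).le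
    · exact (hbelow i (Finset.mem_Icc.2 (by omega)) (lt_of_le_of_ne (h2 ▸ hle) h1)).le
    · exact hle
  · split_ifs
    · linarith
    · exact hprice hn

end ReplaceLevel

section LevelShift

variable {Wm Wp : ℝ → ℝ} {N : ℕ} {α β lam wmin c : ℝ} {nm np : ℕ} {wm wp : ℕ → ℝ}

lemma LotFeasible.lotObj_le_rescale (h : LotFeasible Wm Wp N α β lam nm np wm wp)
    (hWm : StrictMonoOn Wm (Set.Icc 0 1)) (hα : 0 < α) (hlam : 0 < lam) (hN : nm ≤ N)
    (hG : 0 < gainValue Wp N α β lam np wp) :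
    LotObj nm np wm wp ≤ LotObj nm np wm (fun j =>
      (-lossValue Wm N α β lam nm wm / gainValue Wp N α β lam np wp) ^ (1 / α) * wp j) := by
  have hIR : 0 ≤ lossValue Wm N α β lam nm wm + gainValue Wp N α β lam np wp := h.1
  have hL := lossValue_nonpos (β := β) hWm hα hlam hN fun i hi => h.wm_nonpos hi
  have hs : (-lossValue Wm N α β lam nm wm / gainValue Wp N α β lam np wp) ^ (1 / α) ≤ 1 :=
    Real.rpow_le_one (div_nonneg (neg_nonneg.2 hL) hG.le) ((div_le_one hG).2 (by linarith))
      (by positivity)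
  unfold LotObj
  rw [← mul_sum]
  nlinarith [sum_nonneg fun j hj => h.wp_nonneg hj]

lemma eventually_plotFeasible_replaceLevel (hWm : StrictMonoOn Wm (Set.Icc 0 1)) (hα : 0 < α)
    (hlam : 0 < lam) (hN : nm ≤ N) (h : PLotFeasible Wm Wp N α β lam wmin nm np wm wp)
    (hG : 0 < gainValue Wp N α β lam np wp) (hc : wmin < c) (hc0 : c < 0) :
    ∀ᶠ V in 𝓝 (-c), PLotFeasible Wm Wp N α β lam wmin nm np (replaceLevel wm c (-V))
      (fun j => (-lossValue Wm N α β lam nm (replaceLevel wm c (-V)) /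
        gainValue Wp N α β lam np wp) ^ (1 / α) * wp j) := by
  filter_upwards [eventually_replaceLevel_ordered h.1.2.2.2.2 h.1.2.2.2.1 h.2 hc hc0,
    eventually_gt_nhds (neg_pos.2 hc0)] with V ⟨htop, hmono, hprice⟩ hV
  have hL : lossValue Wm N α β lam nm (replaceLevel wm c (-V)) ≤ 0 := by
    refine lossValue_nonpos hWm hα hlam hN fun i hi => ?_
    unfold replaceLevel
    split_ifs
    · linarith
    · exact h.1.wm_nonpos hi
  have hs := Real.rpow_nonneg (div_nonneg (neg_nonneg.2 hL) hG.le) (1 / α)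
  refine ⟨⟨?_, fun hnp => mul_nonneg hs (h.1.2.1 hnp),
    fun j hj => mul_le_mul_of_nonneg_left (h.1.2.2.1 j hj) hs, htop, hmono⟩, hprice⟩
  show 0 ≤ lossValue Wm N α β lam nm (replaceLevel wm c (-V)) + gainValue Wp N α β lam np
    (fun j => (-lossValue Wm N α β lam nm (replaceLevel wm c (-V)) /
      gainValue Wp N α β lam np wp) ^ (1 / α) * wp j)
  rw [gainValue_rescale hα.ne' (fun j hj => h.1.wp_nonneg hj) hG (neg_nonneg.2 hL), add_neg_cancel]

theorem exists_lotObj_gt_of_wmin_lt (hWm : StrictMonoOn Wm (Set.Icc 0 1)) (hα : 0 < α)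
    (hβ0 : 0 < β) (hβα : β ≤ α) (hβ1 : β < 1) (hlam : 0 < lam) (hN : nm ≤ N)
    (h : PLotFeasible Wm Wp N α β lam wmin nm np wm wp) (hpos : 0 < LotObj nm np wm wp)
    (hlast : wm nm < 0) {i : ℕ} (hi : i ∈ Icc 1 nm) (hwi : wmin < wm i) :
    ∃ wm' wp', PLotFeasible Wm Wp N α β lam wmin nm np wm' wp' ∧
      LotObj nm np wm wp < LotObj nm np wm' wp' := by
  by_contra! hopt
  obtain ⟨hG, hB⟩ := h.1.gainValue_pos_and_sum_pos hWm hα hlam hN hpos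
  have hneg : ∀ j ∈ Icc 1 nm, wm j < 0 := fun j hj => (h.1.wm_le_last hj).trans_lt hlast
  set c := wm i
  have hc0 : 0 < -c := neg_pos.2 (hneg i hi)
  set G := gainValue Wp N α β lam np wp
  set B := ∑ j ∈ Icc 1 np, wp j
  set R := -∑ j ∈ Icc 1 nm with wm j ≠ c, lossW Wm N j * cptU α β lam (wm j)
  set Λ := lam * ∑ j ∈ Icc 1 nm with wm j = c, lossW Wm N j
  set M := ∑ j ∈ Icc 1 nm with wm j ≠ c, -wm j
  set κ := ((#{j ∈ Icc 1 nm | wm j = c} : ℕ) : ℝ)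
  set ψ := fun V => LotObj nm np (replaceLevel wm c (-V)) (fun j =>
    (-lossValue Wm N α β lam nm (replaceLevel wm c (-V)) / G) ^ (1 / α) * wp j)
  have hrest : ∀ j ∈ {j ∈ Icc 1 nm | wm j ≠ c}, lossW Wm N j * cptU α β lam (wm j) < 0 :=
    fun j hj => mul_neg_of_pos_of_neg (lossW_pos hWm hN (mem_filter.1 hj).1)
      (cptU_neg hlam (hneg j (mem_filter.1 hj).1))
  have hR : 0 ≤ R := neg_nonneg.2 (sum_nonpos fun j hj => (hrest j hj).le)
  have hdeg : R = 0 → M = 0 := fun hR0 => by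
    obtain hempty | hne := {j ∈ Icc 1 nm | wm j ≠ c}.eq_empty_or_nonempty
    · simp only [M, hempty, sum_empty]
    · linarith [sum_neg hrest hne]
  have hΛ : 0 < Λ := mul_pos hlam
    (sum_pos (fun j hj => lossW_pos hWm hN (mem_filter.1 hj).1) ⟨i, mem_filter.2 ⟨hi, rfl⟩⟩)
  have hψ : ∀ V, 0 ≤ V → ψ V = M + κ * V - B / G ^ (1 / α) * (R + Λ * V ^ β) ^ (1 / α) := by
    intro V hV
    have hL : -lossValue Wm N α β lam nm (replaceLevel wm c (-V)) = R + Λ * V ^ β := by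
      rw [lossValue_replaceLevel hα hβ0 hV]; ring
    simp only [ψ, LotObj, sum_neg_replaceLevel, hL, ← mul_sum,
      Real.div_rpow (add_nonneg hR (mul_nonneg hΛ.le (Real.rpow_nonneg hV β))) hG.le]
    ring
  have hψc : LotObj nm np wm wp ≤ ψ (-c) := by
    simp only [ψ, neg_neg, replaceLevel_self]
    exact h.1.lotObj_le_rescale hWm hα hlam hN hG
  have hmax : IsLocalMax ψ (-c) := by
    filter_upwards [eventually_plotFeasible_replaceLevel hWm hα hlam hN h hG hwi (neg_pos.1 hc0)]
      with V hV using (hopt _ _ hV).trans hψc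
  refine not_isLocalMax_sub_mul_rpow_add_mul_rpow (κ := κ) (b := B / G ^ (1 / α)) (by positivity)
    hR hΛ hα hβ0 hβα hβ1 hc0 hdeg ?_ (hmax.congr ?_)
  · rw [← hψ _ hc0.le]; exact hpos.trans_le hψc
  · filter_upwards [eventually_gt_nhds hc0] with V hV using hψ V hV.le

end LevelShift

theorem price_constrained_losses_at_wmin_general (Wm Wp : ℝ → ℝ) (N : ℕ) (α β lam wmin : ℝ)
    (Nm Np : ℕ) (Pistar : ℝ)
    (hWm : IsPWF Wm) (hWp : IsPWF Wp)
    (hα0 : 0 < α) (hα1 : α < 1) (hβ0 : 0 < β) (hβ1 : β < 1) (hβα : β ≤ α)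
    (hlam : 0 < lam)
    (hsum : Nm + Np = N)
    (hmax : ∀ nm np : ℕ, nm + np = N → ∀ wm wp : ℕ → ℝ,
        PLotFeasible Wm Wp N α β lam wmin nm np wm wp → LotObj nm np wm wp ≤ Pistar)
    (hpos : 0 < Pistar) :
    ∀ wm wp : ℕ → ℝ, PLotFeasible Wm Wp N α β lam wmin Nm Np wm wp →
      LotObj Nm Np wm wp = Pistar →
      ∀ i ∈ Finset.Icc 1 Nm, wm i = wmin := by
  intro wm wp h hobj i hi
  by_contra hne
  rw [← hobj] at hpos hmax
  have hNm : 1 ≤ Nm := (Finset.mem_Icc.1 hi).1.trans (Finset.mem_Icc.1 hi).2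
  rcases (h.1.wm_nonpos (Finset.mem_Icc.2 ⟨hNm, le_rfl⟩)).lt_or_eq with hlast | hlast
  · obtain ⟨wm', wp', h', hlt⟩ := exists_lotObj_gt_of_wmin_lt hWm.1.1 hα0 hβ0 hβα hβ1 hlam
      (by omega) h hpos hlast hi ((h.wmin_le hi).lt_of_ne (Ne.symm hne))
    exact (hmax Nm Np hsum wm' wp' h').not_gt hlt
  · obtain ⟨nm, rfl⟩ : ∃ nm, Nm = nm + 1 := ⟨Nm - 1, by omega⟩
    obtain ⟨wp', h', hlt⟩ :=
      exists_lotObj_gt_of_wm_last_eq_zero hWm.1.1 hWp.1.1 hα0 hα1 hlam (by omega) h hlast hpos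
    exact (hmax nm (Np + 1) (by omega) wm wp' h').not_gt hlt

/-- for `α ≥ β`, if `(N⁻,N⁺)` attains the maximum profit `Π'* > 0` of the
price-constrained lottery problems among all splits `n⁻ + n⁺ = N`, then every global
maximizer of `P'(N⁻,N⁺)` satisfies `w⁻_i = w_min` for all `i ∈ {1,…,N⁻}`. -/
theorem price_constrained_losses_at_wmin (Wm Wp : ℝ → ℝ) (N : ℕ) (α β lam wmin : ℝ)
    (Nm Np : ℕ) (Pistar : ℝ)
    (hWm : IsPWF Wm) (hWp : IsPWF Wp)
    (hα0 : 0 < α) (hα1 : α < 1) (hβ0 : 0 < β) (hβ1 : β < 1) (hβα : β ≤ α)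
    (hlam : 0 < lam) (hwmin : wmin < 0)
    (hsum : Nm + Np = N)
    (hopt : IsGreatest {S : ℝ | ∃ wm wp : ℕ → ℝ,
        PLotFeasible Wm Wp N α β lam wmin Nm Np wm wp ∧ S = LotObj Nm Np wm wp} Pistar)
    (hmax : ∀ nm np : ℕ, nm + np = N → ∀ wm wp : ℕ → ℝ,
        PLotFeasible Wm Wp N α β lam wmin nm np wm wp → LotObj nm np wm wp ≤ Pistar)
    (hpos : 0 < Pistar) :
    ∀ wm wp : ℕ → ℝ, PLotFeasible Wm Wp N α β lam wmin Nm Np wm wp →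
      LotObj Nm Np wm wp = Pistar →
      ∀ i ∈ Finset.Icc 1 Nm, wm i = wmin :=
  price_constrained_losses_at_wmin_general Wm Wp N α β lam wmin Nm Np Pistar hWm hWp hα0 hα1 hβ0 hβ1
    hβα hlam hsum hmax hpos
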